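/- Let f be a Barenblatt profile with exponent α > N − 2 such that f(η) → 0, f'(η) → 0 and f''(η) → 0 as η → ∞. Suppose F(η) = α·f(η) + η·f'(η) has exactly n ≥ 1 zeros η_1 < η_2 < ⋯ < η_n in (0,∞), and that F alternates sign: with η_0 = 0, the sign of F on (η_{m−1}, η_m) is (−1)^{m+1} for m = 1,…,n, and the sign of F on (η_n, ∞) is (−1)^n. Then f has exactly n − 1 zeros in [0,∞), one in each interval (η_m, η_{m+1}) for m = 1,…,n−1, and f has no zero in [0, η_1] ∪ [η_n, ∞). -/

import Mathlib

/-- A Barenblatt profile with exponent `α` (dimension `N`, parameter `γ`). -/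
def IsBarenblattProfile (N : ℕ) (γ α : ℝ) (f f' f'' : ℝ → ℝ) : Prop :=
  (∀ η ∈ Set.Ici (0:ℝ), HasDerivWithinAt f (f' η) (Set.Ici 0) η) ∧
  ContinuousOn f' (Set.Ici 0) ∧
  (∀ η ∈ Set.Ioi (0:ℝ), HasDerivWithinAt f' (f'' η) (Set.Ioi 0) η) ∧
  f 0 = 1 ∧ f' 0 = 0 ∧
  (∀ η : ℝ, 0 < η →
    f'' η + (((N : ℝ) - 1) / η) * f' η =
      -(1/2) * (α * f η + η * f' η) + (γ/2) * |α * f η + η * f' η|)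

/-!
Write `F = α f + η f'`, so that `(η^α f)' = η^(α-1) F`: on each interval where `F` has a sign,
`η^α f` is strictly monotone. Multiplying by the sign `ε = ±1` that makes `ε F ≤ 0` there, the
absolute value disappears and `ε f` solves the linear equation `f'' + ((N-1)/η) f' = -κ F` with
`κ = (1 + ε γ)/2 > 0`.

At a root `r` of `F` followed by `ε F < 0`, that equation gives `F'(r) = (α + 2 - N) f'(r)`, so
`ε f'(r) ≤ 0` and `α ε f(r) = -r ε f'(r) ≥ 0`; `f(r) = 0` is excluded by uniqueness for the
Cauchy problem (the energy `f'^2 + κ α f^2` does not increase). Hence `f` alternates in sign at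
`η_1, …, η_n`, and the monotonicity of `η^α f` gives exactly one zero in each `(η_m, η_(m+1))`
and none on `[0, η_1]`, where `η^α f` rises from `0`.

On the tail `(η_n, ∞)`, normalised to `F < 0`, `η^(N-1) f'` increases. If `f'` were ever
positive, `η^(N-1) f'` would stay above a positive constant, while a Lyapunov function bounds
`η^α |f|`, and `η f' < -α f` then forces `η^(N-1) f' = O(η^(N-2-α)) → 0` since `α > N - 2`.
So `f` decreases to its limit `0`, and, `η^α f` being strictly decreasing, it has no zero.
-/

open Set Filter Topology

lemma hasDerivAt_rpow_mul {p η v : ℝ} {g : ℝ → ℝ} (hη : 0 < η) (hg : HasDerivAt g v η) :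
    HasDerivAt (fun x => x ^ p * g x) (η ^ (p - 1) * (p * g η + η * v)) η := by
  refine ((Real.hasDerivAt_rpow_const (p := p) (Or.inl hη.ne')).mul hg).congr_deriv ?_
  rw [← sub_add_cancel p 1, Real.rpow_add_one hη.ne', add_sub_cancel_right]
  ring

lemma eventually_add_le_mul_sq {κ : ℝ} (hκ : 0 < κ) (c : ℝ) :
    ∀ᶠ η in atTop, η + c ≤ κ * η ^ 2 := by
  filter_upwards [eventually_ge_atTop 1, eventually_ge_atTop ((|c| + 1) / κ)] with η h₁ h₂
  rw [div_le_iff₀' hκ] at h₂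
  nlinarith [le_abs_self c, abs_nonneg c]

lemma HasDerivAt.nonpos_of_neg_right {g : ℝ → ℝ} {g' r b : ℝ} (hg : HasDerivAt g g' r)
    (hrb : r < b) (hr : g r = 0) (hneg : ∀ x ∈ Ioo r b, g x < 0) : g' ≤ 0 := by
  refine le_of_tendsto ((hasDerivAt_iff_tendsto_slope.1 hg).mono_left (nhdsGT_le_nhdsNE r)) ?_
  filter_upwards [Ioo_mem_nhdsGT hrb] with x hx
  rw [slope_def_field, hr, sub_zero]
  exact (div_neg_of_neg_of_pos (hneg x hx) (sub_pos.2 hx.1)).le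

lemma exists_mem_Ioo_of_ne {ηs : ℕ → ℝ} {x : ℝ} {k n : ℕ} (hkn : k ≤ n) (hk : ηs k < x)
    (hn : x < ηs n) (hne : ∀ m, k < m → m < n → x ≠ ηs m) :
    ∃ m, k ≤ m ∧ m < n ∧ x ∈ Ioo (ηs m) (ηs (m + 1)) := by
  induction n, hkn using Nat.le_induction with
  | base => exact absurd (hk.trans hn) (lt_irrefl _)
  | succ n hkn ih =>
    rcases lt_trichotomy x (ηs n) with hlt | heq | hgt
    · obtain ⟨m, hkm, hmn, hm⟩ := ih hlt fun m h₁ h₂ => hne m h₁ (by omega)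
      exact ⟨m, hkm, by omega, hm⟩
    · rcases hkn.eq_or_lt with rfl | hkn'
      · exact absurd heq hk.ne'
      · exact absurd heq (hne n hkn' (lt_add_one n))
    · exact ⟨n, hkn, lt_add_one n, hgt, hn⟩

lemma encard_zeros_eq {f : ℝ → ℝ} {n : ℕ} {ηs : ℕ → ℝ} (hηs : StrictMonoOn ηs (Iic n))
    (hn : 1 ≤ n) (h₁ : 0 ≤ ηs 1) (hfirst : ∀ η, 0 ≤ η → η ≤ ηs 1 → f η ≠ 0)
    (hlast : ∀ η, ηs n ≤ η → f η ≠ 0) (hroot : ∀ m, 1 ≤ m → m ≤ n → f (ηs m) ≠ 0)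
    (hgap : ∀ m, 1 ≤ m → m + 1 ≤ n → ∃! η, η ∈ Ioo (ηs m) (ηs (m + 1)) ∧ f η = 0) :
    {η | 0 ≤ η ∧ f η = 0}.encard = (n - 1 : ℕ) := by
  choose! ζ hζ hζu using hgap
  have hset : {η | 0 ≤ η ∧ f η = 0} = ζ '' Ico 1 n := by
    ext η
    constructor
    · rintro ⟨hη₀, hfη⟩
      have h1 : ηs 1 < η := lt_of_not_ge fun h => hfirst η hη₀ h hfη
      have h2 : η < ηs n := lt_of_not_ge fun h => hlast η h hfη
      obtain ⟨m, hm1, hmn, hm⟩ := exists_mem_Ioo_of_ne hn h1 h2 fun m h₁ h₂ h =>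
        hroot m h₁.le h₂.le (h ▸ hfη)
      exact ⟨m, ⟨hm1, hmn⟩, (hζu m hm1 hmn η ⟨hm, hfη⟩).symm⟩
    · rintro ⟨m, ⟨hm1, hmn⟩, rfl⟩
      obtain ⟨hmem, hz⟩ := hζ m hm1 hmn
      have : ηs 1 ≤ ηs m := hηs.monotoneOn (mem_Iic.2 hn) (mem_Iic.2 hmn.le) hm1
      exact ⟨h₁.trans (this.trans hmem.1.le), hz⟩
  have hζmono : StrictMonoOn ζ (Ico 1 n) := fun i hi j hj hij =>
    calc ζ i < ηs (i + 1) := (hζ i hi.1 hi.2).1.2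
      _ ≤ ηs j := hηs.monotoneOn (mem_Iic.2 hi.2) (mem_Iic.2 hj.2.le) hij
      _ < ζ j := (hζ j hj.1 hj.2).1.1
  rw [hset, hζmono.injOn.encard_image, ← Finset.coe_Ico, Set.encard_coe_eq_coe_finsetCard,
    Nat.card_Ico]

lemma neg_one_pow_succ_mul (m : ℕ) (x : ℝ) : (-1 : ℝ) ^ (m + 1) * x = -((-1) ^ m * x) := by
  ring

namespace Barenblatt

def F (α : ℝ) (f f' : ℝ → ℝ) (η : ℝ) : ℝ := α * f η + η * f' η

lemma F_const_mul (α ε : ℝ) (f f' : ℝ → ℝ) (η : ℝ) :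
    F α (fun x => ε * f x) (fun x => ε * f' x) η = ε * F α f f' η := by
  simp only [F]; ring

section Weight

variable {α : ℝ} {f f' : ℝ → ℝ} {s : Set ℝ}

lemma strictAntiOn_rpow_mul (hs : Convex ℝ s) (hs₀ : s ⊆ Ici 0) (hα : 0 < α)
    (hc : ContinuousOn f s) (hd : ∀ x ∈ interior s, HasDerivAt f (f' x) x)
    (hF : ∀ x ∈ interior s, F α f f' x < 0) :
    StrictAntiOn (fun x => x ^ α * f x) s := by
  have hpos : ∀ x ∈ interior s, 0 < x := fun x hx => by
    simpa only [interior_Ici, mem_Ioi] using interior_mono hs₀ hx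
  refine strictAntiOn_of_hasDerivWithinAt_neg hs
    ((continuousOn_id.rpow_const fun _ _ => Or.inr hα.le).mul hc)
    (fun x hx => (hasDerivAt_rpow_mul (hpos x hx) (hd x hx)).hasDerivWithinAt)
    (fun x hx => mul_neg_of_pos_of_neg (Real.rpow_pos_of_pos (hpos x hx) _) (hF x hx))

lemma neg_of_F_neg (hs : Convex ℝ s) (hs₀ : s ⊆ Ici 0) (hα : 0 < α)
    (hc : ContinuousOn f s) (hd : ∀ x ∈ interior s, HasDerivAt f (f' x) x)
    (hF : ∀ x ∈ interior s, F α f f' x < 0) {a x : ℝ} (ha : a ∈ s) (hfa : f a ≤ 0)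
    (hx : x ∈ s) (hax : a < x) : f x < 0 := by
  have hG := strictAntiOn_rpow_mul hs hs₀ hα hc hd hF ha hx hax
  refine neg_of_mul_neg_right (hG.trans_le ?_) (Real.rpow_nonneg (hs₀ hx) _)
  exact mul_nonpos_of_nonneg_of_nonpos (Real.rpow_nonneg (hs₀ ha) _) hfa

lemma existsUnique_zero_of_F_neg {a b : ℝ} (ha : 0 ≤ a) (hab : a ≤ b) (hα : 0 < α)
    (hc : ContinuousOn f (Icc a b)) (hd : ∀ x ∈ Ioo a b, HasDerivAt f (f' x) x)
    (hF : ∀ x ∈ Ioo a b, F α f f' x < 0) (hfa : 0 < f a) (hfb : f b < 0) :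
    ∃! x, x ∈ Ioo a b ∧ f x = 0 := by
  obtain ⟨x, hx, hfx⟩ := intermediate_value_Ioo' hab hc ⟨hfb, hfa⟩
  refine ⟨x, ⟨hx, hfx⟩, fun y ⟨hy, hfy⟩ => ?_⟩
  have hinj := (strictAntiOn_rpow_mul (convex_Icc a b) (fun z hz => ha.trans hz.1) hα hc
    (by simpa only [interior_Icc] using hd) (by simpa only [interior_Icc] using hF)).injOn
  exact hinj (Ioo_subset_Icc_self hy) (Ioo_subset_Icc_self hx) (by simp only [hfx, hfy, mul_zero])

end Weight

def LinearSolOn (N κ α : ℝ) (f f' f'' : ℝ → ℝ) (s : Set ℝ) : Prop :=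
  ∀ η ∈ s, HasDerivAt f (f' η) η ∧ HasDerivAt f' (f'' η) η ∧
    f'' η + (N - 1) / η * f' η = -κ * F α f f' η

namespace LinearSolOn

variable {N κ α : ℝ} {f f' f'' : ℝ → ℝ} {s : Set ℝ}

lemma mono {t : Set ℝ} (h : LinearSolOn N κ α f f' f'' s) (hts : t ⊆ s) :
    LinearSolOn N κ α f f' f'' t :=
  fun η hη => h η (hts hη)

lemma continuousOn (h : LinearSolOn N κ α f f' f'' s) : ContinuousOn f s :=
  fun η hη => (h η hη).1.continuousAt.continuousWithinAt

lemma hasDerivAt_F (h : LinearSolOn N κ α f f' f'' s) {η : ℝ} (hη : η ∈ s) (hη₀ : η ≠ 0) :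
    HasDerivAt (F α f f') ((α + 2 - N) * f' η - κ * η * F α f f' η) η := by
  obtain ⟨hd, hd', hode⟩ := h η hη
  refine ((hd.const_mul α).add ((hasDerivAt_id η).mul hd')).congr_deriv ?_
  field_simp at hode
  simp only [id, F] at hode ⊢
  linear_combination hode

lemma eq_zero_of_initial_zero {r b : ℝ} (h : LinearSolOn N κ α f f' f'' (Ico r b)) (hr : 0 < r)
    (hN : 1 ≤ N) (hκ : 0 < κ) (hα : 0 < α) (hfr : f r = 0) (hf'r : f' r = 0) :
    ∀ t ∈ Ico r b, f t = 0 := by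
  set E : ℝ → ℝ := fun η => f' η ^ 2 + κ * α * f η ^ 2
  have hE : ∀ η ∈ Ico r b,
      HasDerivAt E (-2 * f' η ^ 2 * ((N - 1) / η + κ * η)) η := by
    intro η hη
    obtain ⟨hd, hd', hode⟩ := h η hη
    refine ((hd'.pow 2).add ((hd.pow 2).const_mul (κ * α))).congr_deriv ?_
    rw [eq_sub_of_add_eq hode]
    simp only [F]
    push_cast
    ring
  have hanti : AntitoneOn E (Ico r b) := by
    refine antitoneOn_of_hasDerivWithinAt_nonpos (convex_Ico r b)
      (fun η hη => (hE η hη).continuousAt.continuousWithinAt)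
      (fun η hη => (hE η (interior_subset hη)).hasDerivWithinAt) fun η hη => ?_
    have hη₀ : 0 < η := hr.trans_le (interior_subset hη).1
    have : 0 ≤ (N - 1) / η + κ * η := by
      have := div_nonneg (sub_nonneg.2 hN) hη₀.le
      positivity
    nlinarith [sq_nonneg (f' η)]
  intro t ht
  have hEt : E t ≤ 0 := by
    simpa [E, hfr, hf'r] using hanti (left_mem_Ico.2 (ht.1.trans_lt ht.2)) ht ht.1
  have hf2 : f t ^ 2 ≤ 0 := le_of_mul_le_mul_left
    (by linarith [sq_nonneg (f' t)] : κ * α * f t ^ 2 ≤ κ * α * 0) (mul_pos hκ hα)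
  exact pow_eq_zero_iff two_ne_zero |>.1 (le_antisymm hf2 (sq_nonneg _))

lemma pos_of_F_eq_zero {r b : ℝ} (h : LinearSolOn N κ α f f' f'' (Ico r b)) (hr : 0 < r)
    (hrb : r < b) (hN : 1 ≤ N) (hαN : N - 2 < α) (hκ : 0 < κ) (hα : 0 < α)
    (hFr : F α f f' r = 0) (hF : ∀ η ∈ Ioo r b, F α f f' η < 0) : 0 < f r := by
  have hmem : r ∈ Ico r b := left_mem_Ico.2 hrb
  have hF' := (h.hasDerivAt_F hmem hr.ne').nonpos_of_neg_right hrb hFr hF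
  rw [hFr, mul_zero, sub_zero] at hF'
  have hf'r : f' r ≤ 0 := nonpos_of_mul_nonpos_right hF' (by linarith)
  have hfr : 0 ≤ f r := by
    simp only [F] at hFr
    nlinarith
  refine hfr.lt_of_ne fun hfr₀ => ?_
  have hf'r₀ : f' r = 0 := by
    simp only [F, ← hfr₀, mul_zero, zero_add, mul_eq_zero, hr.ne', false_or] at hFr
    exact hFr
  have hzero := h.eq_zero_of_initial_zero hr hN hκ hα hfr₀.symm hf'r₀
  obtain ⟨c, hc⟩ := exists_between hrb
  have hev : f =ᶠ[𝓝 c] fun _ => 0 :=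
    eventually_of_mem (Ioo_mem_nhds hc.1 hc.2) fun x hx => hzero x (Ioo_subset_Ico_self hx)
  have hf'c : f' c = 0 :=
    (h c (Ioo_subset_Ico_self hc)).1.unique ((hasDerivAt_const c 0).congr_of_eventuallyEq hev)
  have hFc := hF c hc
  simp only [F, hzero c (Ioo_subset_Ico_self hc), hf'c, mul_zero, add_zero,
    lt_self_iff_false] at hFc

variable {R : ℝ}

/-- `η^α (-f) + η^(α-1) (-F)` is eventually non-increasing, because `(-F)' ≤ κ η F` while
`f' > 0`. -/
lemma exists_rpow_mul_neg_le (h : LinearSolOn N κ α f f' f'' (Ioi R)) (hR : 0 ≤ R)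
    (hαN : N - 2 < α) (hκ : 0 < κ) (hF : ∀ η ∈ Ioi R, F α f f' η < 0)
    (hf' : ∀ η ∈ Ioi R, 0 < f' η) : ∃ B, ∀ᶠ η in atTop, η ^ α * -f η ≤ B := by
  obtain ⟨η₂, hη₂⟩ := eventually_atTop.1
    ((eventually_add_le_mul_sq hκ (α - 1)).and (eventually_gt_atTop R))
  have hRη₂ : R < η₂ := (hη₂ η₂ le_rfl).2
  set Z : ℝ → ℝ := fun x => x ^ α * -f x + x ^ (α - 1) * -F α f f' x
  have hZ : ∀ x ∈ Ioi R, HasDerivAt Z (x ^ (α - 2) *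
      (-F α f f' x * (x + (α - 1) - κ * x ^ 2) - x * (α + 2 - N) * f' x)) x := by
    intro x hx
    have hx₀ : 0 < x := hR.trans_lt hx
    have h1 := hasDerivAt_rpow_mul (p := α) hx₀ (h x hx).1.neg
    have h2 := hasDerivAt_rpow_mul (p := α - 1) hx₀ (h.hasDerivAt_F hx hx₀.ne').neg
    refine (h1.add h2).congr_deriv ?_
    rw [show α - 1 - 1 = α - 2 by ring, show α - 1 = α - 2 + 1 by ring,
      Real.rpow_add_one hx₀.ne']
    simp only [F, Pi.neg_apply]
    ring
  have hanti : AntitoneOn Z (Ici η₂) := by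
    have hsub : Ici η₂ ⊆ Ioi R := Ici_subset_Ioi.2 hRη₂
    refine antitoneOn_of_hasDerivWithinAt_nonpos (convex_Ici η₂)
      (fun x hx => (hZ x (hsub hx)).continuousAt.continuousWithinAt)
      (fun x hx => (hZ x (hsub (interior_subset hx))).hasDerivWithinAt) fun x hx => ?_
    rw [interior_Ici] at hx
    have hx₀ : 0 < x := hR.trans_lt (hsub (Ioi_subset_Ici_self hx))
    refine mul_nonpos_of_nonneg_of_nonpos (Real.rpow_nonneg hx₀.le _) ?_
    have hFx : 0 ≤ -F α f f' x := (neg_pos.2 (hF x (hsub (Ioi_subset_Ici_self hx)))).le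
    have h1 := mul_nonpos_of_nonneg_of_nonpos hFx (sub_nonpos.2 (hη₂ x hx.le).1)
    have h2 : 0 < x * (α + 2 - N) * f' x :=
      mul_pos (mul_pos hx₀ (by linarith)) (hf' x (hsub (Ioi_subset_Ici_self hx)))
    linarith
  refine ⟨Z η₂, ?_⟩
  filter_upwards [eventually_ge_atTop η₂] with η hη
  have hη₀ : 0 < η := hR.trans_lt (hRη₂.trans_le hη)
  have hrest : 0 ≤ η ^ (α - 1) * -F α f f' η :=
    mul_nonneg (Real.rpow_nonneg hη₀.le _) (neg_nonneg.2 (hF η (hRη₂.trans_le hη)).le)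
  have hZη := hanti self_mem_Ici hη hη
  simp only [Z] at hZη
  linarith

lemma strictMonoOn_rpow_mul_deriv (h : LinearSolOn N κ α f f' f'' (Ioi R)) (hR : 0 ≤ R)
    (hκ : 0 < κ) (hF : ∀ η ∈ Ioi R, F α f f' η < 0) :
    StrictMonoOn (fun x => x ^ (N - 1) * f' x) (Ioi R) := by
  have hH : ∀ x ∈ Ioi R,
      HasDerivAt (fun x => x ^ (N - 1) * f' x) (x ^ (N - 2) * (-κ * x * F α f f' x)) x := by
    intro x hx
    have hx₀ : 0 < x := hR.trans_lt hx
    obtain ⟨-, hd', hode⟩ := h x hx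
    refine (hasDerivAt_rpow_mul hx₀ hd').congr_deriv ?_
    field_simp at hode
    rw [show N - 1 - 1 = N - 2 by ring]
    linear_combination x ^ (N - 2) * hode
  refine strictMonoOn_of_hasDerivWithinAt_pos (convex_Ioi R)
    (fun x hx => (hH x hx).continuousAt.continuousWithinAt)
    (fun x hx => (hH x (interior_subset hx)).hasDerivWithinAt) fun x hx => ?_
  rw [interior_Ioi] at hx
  have hx₀ : 0 < x := hR.trans_lt hx
  have : 0 < κ * x * -F α f f' x := mul_pos (mul_pos hκ hx₀) (neg_pos.2 (hF x hx))
  exact mul_pos (Real.rpow_pos_of_pos hx₀ _) (by linarith)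

lemma deriv_nonpos (h : LinearSolOn N κ α f f' f'' (Ioi R)) (hR : 0 ≤ R) (hα : 0 < α)
    (hαN : N - 2 < α) (hκ : 0 < κ) (hF : ∀ η ∈ Ioi R, F α f f' η < 0) :
    ∀ η ∈ Ioi R, f' η ≤ 0 := by
  intro η₁ (hη₁ : R < η₁)
  by_contra! hη₁pos
  have hη₁₀ : 0 < η₁ := hR.trans_lt hη₁
  set H : ℝ → ℝ := fun x => x ^ (N - 1) * f' x
  have hmono : StrictMonoOn H (Ioi R) := h.strictMonoOn_rpow_mul_deriv hR hκ hF
  have hHη₁ : 0 < H η₁ := mul_pos (Real.rpow_pos_of_pos hη₁₀ _) hη₁pos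
  have hf'pos : ∀ x ∈ Ioi η₁, 0 < f' x := fun x (hx : η₁ < x) =>
    pos_of_mul_pos_right (hHη₁.trans (hmono hη₁ (hη₁.trans hx) hx))
      (Real.rpow_nonneg (hη₁₀.trans hx).le _)
  obtain ⟨B, hB⟩ := (h.mono (Ioi_subset_Ioi hη₁.le)).exists_rpow_mul_neg_le hη₁₀.le hαN hκ
    (fun x (hx : η₁ < x) => hF x (hη₁.trans hx)) hf'pos
  have htend : Tendsto (fun x => α * B * x ^ (N - 2 - α)) atTop (𝓝 0) := by
    simpa [neg_sub] using (tendsto_rpow_neg_atTop (by linarith : 0 < α - (N - 2))).const_mul (α * B)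
  refine hHη₁.not_ge (ge_of_tendsto htend ?_)
  filter_upwards [hB, eventually_gt_atTop η₁] with x hBx hx
  have hx₀ : 0 < x := hη₁₀.trans hx
  have hFx := hF x (hη₁.trans hx)
  simp only [F] at hFx
  calc H η₁ ≤ H x := (hmono hη₁ (hη₁.trans hx) hx).le
    _ = x ^ (N - 2) * (x * f' x) := by
      simp only [H]; rw [show N - 1 = N - 2 + 1 by ring, Real.rpow_add_one hx₀.ne']; ring
    _ ≤ x ^ (N - 2) * (α * -f x) :=
      mul_le_mul_of_nonneg_left (by linarith) (Real.rpow_nonneg hx₀.le _)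
    _ = α * x ^ (N - 2 - α) * (x ^ α * -f x) := by
      rw [← sub_add_cancel (N - 2) α, Real.rpow_add hx₀, add_sub_cancel_right]; ring
    _ ≤ α * x ^ (N - 2 - α) * B :=
      mul_le_mul_of_nonneg_left hBx (mul_nonneg hα.le (Real.rpow_nonneg hx₀.le _))
    _ = α * B * x ^ (N - 2 - α) := by ring

lemma pos_of_tendsto_zero (h : LinearSolOn N κ α f f' f'' (Ioi R)) (hR : 0 ≤ R) (hα : 0 < α)
    (hαN : N - 2 < α) (hκ : 0 < κ) (hF : ∀ η ∈ Ioi R, F α f f' η < 0)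
    (hf0 : Tendsto f atTop (𝓝 0)) : ∀ η ∈ Ioi R, 0 < f η := by
  have hd : ∀ x ∈ interior (Ioi R), HasDerivAt f (f' x) x := by
    simpa only [interior_Ioi] using fun x hx => (h x hx).1
  have hanti : AntitoneOn f (Ioi R) :=
    antitoneOn_of_hasDerivWithinAt_nonpos (convex_Ioi R) h.continuousOn
      (fun x hx => (hd x hx).hasDerivWithinAt)
      (by simpa only [interior_Ioi] using h.deriv_nonpos hR hα hαN hκ hF)
  intro η hη
  refine lt_of_not_ge fun hle => ?_
  have hη' : η + 1 ∈ Ioi R := hη.trans (lt_add_one η)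
  have hneg := neg_of_F_neg (convex_Ioi R) (fun x hx => hR.trans hx.le) hα h.continuousOn hd
    (by simpa only [interior_Ioi] using hF) hη hle hη' (lt_add_one η)
  have hlim : 0 ≤ f (η + 1) := le_of_tendsto hf0 (by
    filter_upwards [eventually_ge_atTop (η + 1)] with x hx
    exact hanti hη' (hη'.trans_le hx) hx)
  linarith

end LinearSolOn

end Barenblatt

namespace IsBarenblattProfile

open Barenblatt

variable {N : ℕ} {γ α : ℝ} {f f' f'' : ℝ → ℝ}

lemma hasDerivAt (hf : IsBarenblattProfile N γ α f f' f'') {η : ℝ} (hη : 0 < η) :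
    HasDerivAt f (f' η) η :=
  (hf.1 η hη.le).hasDerivAt (Ici_mem_nhds hη)

lemma continuousOn (hf : IsBarenblattProfile N γ α f f' f'') : ContinuousOn f (Ici 0) :=
  fun η hη => (hf.1 η hη).continuousWithinAt

lemma linearSolOn (hf : IsBarenblattProfile N γ α f f' f'') {ε : ℝ} (hε : |ε| = 1) {s : Set ℝ}
    (hs : s ⊆ Ioi 0) (hF : ∀ η ∈ s, ε * F α f f' η ≤ 0) :
    LinearSolOn N ((1 + ε * γ) / 2) α
      (fun x => ε * f x) (fun x => ε * f' x) (fun x => ε * f'' x) s := by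
  intro η hη
  have hη₀ : 0 < η := hs hη
  refine ⟨(hf.hasDerivAt hη₀).const_mul ε,
    ((hf.2.2.1 η hη₀).hasDerivAt (Ioi_mem_nhds hη₀)).const_mul ε, ?_⟩
  have habs : |F α f f' η| = -(ε * F α f f' η) := by
    rw [← abs_of_nonpos (hF η hη), abs_mul, hε, one_mul]
  have hode := hf.2.2.2.2.2 η hη₀
  rw [F_const_mul]
  simp only [F] at habs hode ⊢
  rw [habs] at hode
  linear_combination ε * hode

lemma half_one_add_mul_pos {ε γ : ℝ} (hε : |ε| = 1) (hγ₁ : -1 < γ) (hγ₂ : γ < 1) :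
    0 < (1 + ε * γ) / 2 := by
  have : |ε * γ| < 1 := by rw [abs_mul, hε, one_mul, abs_lt]; exact ⟨hγ₁, hγ₂⟩
  linarith [neg_abs_le (ε * γ)]

lemma pos_of_F_pos (hf : IsBarenblattProfile N γ α f f' f'') (hα : 0 < α) {b : ℝ}
    (hF : ∀ η ∈ Ioo 0 b, 0 < F α f f' η) : ∀ η ∈ Icc 0 b, 0 < f η := by
  intro η hη
  rcases hη.1.eq_or_lt with rfl | hη₀
  · rw [hf.2.2.2.1]; exact one_pos
  have hneg := neg_of_F_neg (f := fun x => -1 * f x) (f' := fun x => -1 * f' x)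
    (convex_Icc 0 b) (fun x hx => hx.1) hα
    (continuousOn_const.mul (hf.continuousOn.mono Icc_subset_Ici_self))
    (fun x hx => by rw [interior_Icc] at hx; exact (hf.hasDerivAt hx.1).const_mul (-1))
    (fun x hx => by rw [interior_Icc] at hx; rw [F_const_mul]; linarith [hF x hx])
    (left_mem_Icc.2 (hη₀.le.trans hη.2)) (by rw [hf.2.2.2.1]; norm_num) hη hη₀
  linarith

lemma mul_pos_of_F_eq_zero (hf : IsBarenblattProfile N γ α f f' f'') (hN : 1 ≤ N) (hγ₁ : -1 < γ)
    (hγ₂ : γ < 1) (hα : 0 < α) (hαN : (N : ℝ) - 2 < α) {ε r b : ℝ} (hε : |ε| = 1) (hr : 0 < r)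
    (hrb : r < b) (hFr : F α f f' r = 0) (hF : ∀ η ∈ Ioo r b, ε * F α f f' η < 0) :
    0 < ε * f r := by
  have hF' : ∀ η ∈ Ico r b, ε * F α f f' η ≤ 0 := fun η hη => by
    rcases hη.1.eq_or_lt with rfl | h
    · rw [hFr, mul_zero]
    · exact (hF η ⟨h, hη.2⟩).le
  exact (hf.linearSolOn hε (fun η hη => hr.trans_le hη.1) hF').pos_of_F_eq_zero hr hrb
    (by exact_mod_cast hN) hαN (half_one_add_mul_pos hε hγ₁ hγ₂) hα
    (by rw [F_const_mul, hFr, mul_zero]) (fun η hη => by rw [F_const_mul]; exact hF η hη)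

lemma mul_pos_of_tendsto_zero (hf : IsBarenblattProfile N γ α f f' f'') (hγ₁ : -1 < γ)
    (hγ₂ : γ < 1) (hα : 0 < α) (hαN : (N : ℝ) - 2 < α) {ε R : ℝ} (hε : |ε| = 1) (hR : 0 ≤ R)
    (hF : ∀ η ∈ Ioi R, ε * F α f f' η < 0) (hf0 : Tendsto f atTop (𝓝 0)) :
    ∀ η ∈ Ioi R, 0 < ε * f η :=
  (hf.linearSolOn hε (fun η hη => hR.trans_lt hη) fun η hη => (hF η hη).le).pos_of_tendsto_zero
    hR hα hαN (half_one_add_mul_pos hε hγ₁ hγ₂) (fun η hη => by rw [F_const_mul]; exact hF η hη)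
    (by simpa using hf0.const_mul ε)

lemma existsUnique_zero (hf : IsBarenblattProfile N γ α f f' f'') (hα : 0 < α) {ε a b : ℝ}
    (hε : ε ≠ 0) (ha : 0 < a) (hab : a ≤ b) (hF : ∀ η ∈ Ioo a b, ε * F α f f' η < 0)
    (hfa : 0 < ε * f a) (hfb : ε * f b < 0) : ∃! η, η ∈ Ioo a b ∧ f η = 0 := by
  have h := existsUnique_zero_of_F_neg (f := fun x => ε * f x) (f' := fun x => ε * f' x)
    ha.le hab hα (continuousOn_const.mul (hf.continuousOn.mono fun x hx => ha.le.trans hx.1))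
    (fun x hx => (hf.hasDerivAt (ha.trans hx.1)).const_mul ε)
    (fun x hx => by rw [F_const_mul]; exact hF x hx) hfa hfb
  simpa only [mul_eq_zero, hε, false_or] using h

end IsBarenblattProfile

open Barenblatt

theorem barenblatt_exact_zero_count_general (N : ℕ) (hN : 1 ≤ N) (γ α : ℝ)
    (hγ₁ : -1 < γ) (hγ₂ : γ < 1) (hα : 0 < α) (hαN : (N : ℝ) - 2 < α)
    (f f' f'' : ℝ → ℝ) (hf : IsBarenblattProfile N γ α f f' f'')
    (hf0 : Filter.Tendsto f Filter.atTop (nhds 0))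
    (n : ℕ) (hn : 1 ≤ n) (ηs : ℕ → ℝ) (h0 : ηs 0 = 0)
    (hmono : ∀ m : ℕ, m < n → ηs m < ηs (m + 1))
    (hroots : ∀ η : ℝ, 0 < η →
      (α * f η + η * f' η = 0 ↔ ∃ m : ℕ, 1 ≤ m ∧ m ≤ n ∧ η = ηs m))
    (halt : ∀ m : ℕ, 1 ≤ m → m ≤ n → ∀ η ∈ Set.Ioo (ηs (m - 1)) (ηs m),
      0 < (-1 : ℝ) ^ (m + 1) * (α * f η + η * f' η))
    (haltInf : ∀ η : ℝ, ηs n < η →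
      0 < (-1 : ℝ) ^ n * (α * f η + η * f' η)) :
    {η : ℝ | 0 ≤ η ∧ f η = 0}.encard = ((n - 1 : ℕ) : ℕ∞) ∧
    (∀ m : ℕ, 1 ≤ m → m + 1 ≤ n →
      ∃ η₀ ∈ Set.Ioo (ηs m) (ηs (m + 1)), f η₀ = 0 ∧
        ∀ η ∈ Set.Ioo (ηs m) (ηs (m + 1)), f η = 0 → η = η₀) ∧
    (∀ η : ℝ, 0 ≤ η → η ≤ ηs 1 → f η ≠ 0) ∧
    (∀ η : ℝ, ηs n ≤ η → f η ≠ 0) := by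
  have hηs : StrictMonoOn ηs (Iic n) := strictMonoOn_Iic_of_lt_succ hmono
  have hpos : ∀ m, 1 ≤ m → m ≤ n → 0 < ηs m := fun m h₁ h₂ =>
    h0 ▸ hηs (by simp) (by simpa using h₂) (by omega)
  have hgap : ∀ m < n, ∀ η ∈ Ioo (ηs m) (ηs (m + 1)), (-1) ^ (m + 1) * F α f f' η < 0 :=
    fun m hm η hη => neg_pos.1 (neg_one_pow_succ_mul (m + 1) _ ▸ halt (m + 1) (by omega) hm η hη)
  have htail : ∀ η ∈ Ioi (ηs n), (-1) ^ (n + 1) * F α f f' η < 0 :=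
    fun η hη => neg_one_pow_succ_mul n _ ▸ neg_neg_of_pos (haltInf η hη)
  have hroot : ∀ m, 1 ≤ m → m ≤ n → 0 < (-1) ^ (m + 1) * f (ηs m) := by
    intro m h₁ h₂
    have hFr : F α f f' (ηs m) = 0 := (hroots _ (hpos m h₁ h₂)).2 ⟨m, h₁, h₂, rfl⟩
    rcases h₂.lt_or_eq with h | rfl
    · exact hf.mul_pos_of_F_eq_zero hN hγ₁ hγ₂ hα hαN (abs_neg_one_pow _) (hpos m h₁ h₂) (hmono m h)
        hFr (hgap m h)
    · exact hf.mul_pos_of_F_eq_zero hN hγ₁ hγ₂ hα hαN (abs_neg_one_pow _) (hpos m h₁ le_rfl)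
        (lt_add_one _) hFr fun η hη => htail η hη.1
  have hfirst : ∀ η, 0 ≤ η → η ≤ ηs 1 → f η ≠ 0 := fun η h₁ h₂ =>
    (hf.pos_of_F_pos hα (fun x hx => by simpa [h0] using hgap 0 hn x (by simpa [h0] using hx))
      η ⟨h₁, h₂⟩).ne'
  have hlast : ∀ η, ηs n ≤ η → f η ≠ 0 := by
    intro η hη hfη
    rcases hη.eq_or_lt with rfl | hlt
    · simpa [hfη] using hroot n hn le_rfl
    · simpa [hfη] using hf.mul_pos_of_tendsto_zero hγ₁ hγ₂ hα hαN (abs_neg_one_pow _)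
        (hpos n hn le_rfl).le htail hf0 η hlt
  have hmid : ∀ m, 1 ≤ m → m + 1 ≤ n → ∃! η, η ∈ Ioo (ηs m) (ηs (m + 1)) ∧ f η = 0 :=
    fun m h₁ h₂ => hf.existsUnique_zero hα (by simp) (hpos m h₁ (by omega)) (hmono m h₂).le
      (hgap m h₂) (hroot m h₁ (by omega))
      (neg_pos.1 (neg_one_pow_succ_mul (m + 1) _ ▸ hroot (m + 1) (by omega) h₂))
  refine ⟨encard_zeros_eq hηs hn (hpos 1 le_rfl hn).le hfirst hlast
      (fun m h₁ h₂ => right_ne_zero_of_mul (hroot m h₁ h₂).ne') hmid,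
    fun m h₁ h₂ => ?_, hfirst, hlast⟩
  obtain ⟨η₀, ⟨hmem, hz⟩, huniq⟩ := hmid m h₁ h₂
  exact ⟨η₀, hmem, hz, fun η hη hfη => huniq η ⟨hη, hfη⟩⟩

/-- If `F = α f + η f'` has exactly `n ≥ 1` positive zeros `ηs 1 < ⋯ < ηs n`
(with `ηs 0 = 0`), alternating in sign (sign `(-1)^(m+1)` on `(ηs (m-1), ηs m)`
and `(-1)^n` on `(ηs n, ∞)`), and `f, f', f'' → 0` at infinity, then `f` has
exactly `n - 1` zeros in `[0,∞)`: exactly one in each `(ηs m, ηs (m+1))` for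
`m = 1,…,n-1`, and none in `[0, ηs 1] ∪ [ηs n, ∞)`. -/
theorem barenblatt_exact_zero_count (N : ℕ) (hN : 1 ≤ N) (γ α : ℝ)
    (hγ₁ : -1 < γ) (hγ₂ : γ < 1) (hα : 0 < α) (hαN : (N : ℝ) - 2 < α)
    (f f' f'' : ℝ → ℝ) (hf : IsBarenblattProfile N γ α f f' f'')
    (hf0 : Filter.Tendsto f Filter.atTop (nhds 0))
    (hf'0 : Filter.Tendsto f' Filter.atTop (nhds 0))
    (hf''0 : Filter.Tendsto f'' Filter.atTop (nhds 0))
    (n : ℕ) (hn : 1 ≤ n) (ηs : ℕ → ℝ) (h0 : ηs 0 = 0)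
    (hmono : ∀ m : ℕ, m < n → ηs m < ηs (m + 1))
    (hroots : ∀ η : ℝ, 0 < η →
      (α * f η + η * f' η = 0 ↔ ∃ m : ℕ, 1 ≤ m ∧ m ≤ n ∧ η = ηs m))
    (halt : ∀ m : ℕ, 1 ≤ m → m ≤ n → ∀ η ∈ Set.Ioo (ηs (m - 1)) (ηs m),
      0 < (-1 : ℝ) ^ (m + 1) * (α * f η + η * f' η))
    (haltInf : ∀ η : ℝ, ηs n < η →
      0 < (-1 : ℝ) ^ n * (α * f η + η * f' η)) :
    {η : ℝ | 0 ≤ η ∧ f η = 0}.encard = ((n - 1 : ℕ) : ℕ∞) ∧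
    (∀ m : ℕ, 1 ≤ m → m + 1 ≤ n →
      ∃ η₀ ∈ Set.Ioo (ηs m) (ηs (m + 1)), f η₀ = 0 ∧
        ∀ η ∈ Set.Ioo (ηs m) (ηs (m + 1)), f η = 0 → η = η₀) ∧
    (∀ η : ℝ, 0 ≤ η → η ≤ ηs 1 → f η ≠ 0) ∧
    (∀ η : ℝ, ηs n ≤ η → f η ≠ 0) :=
  barenblatt_exact_zero_count_general N hN γ α hγ₁ hγ₂ hα hαN f f' f'' hf hf0 n hn ηs h0 hmono
    hroots halt haltInf
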